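/- Let (φ, ψ, θ, P) be a classical solution of the vertically-damped thermodiffusive Bresse–Timoshenko system with Dirichlet boundary conditions, and define F₂(t) = ρ1 ∫₀ᴸ φ φ_t dx + (μ/2) ∫₀ᴸ φ² dx + (μ ρ2/(2κ)) ∫₀ᴸ φ_t² dx + ρ2 ∫₀ᴸ φ_tx φ_x dx. Then there exists a constant c > 0, depending only on the coefficients and L, such that for every t > 0, F₂′(t) ≤ −(ρ1 ρ2/κ) ∫₀ᴸ φ_tt² dx − (κ/2) ∫₀ᴸ (φ_x + ψ)² dx − (α/2) ∫₀ᴸ ψ_x² dx + ρ2 ∫₀ᴸ φ_tx² dx + ρ1 ∫₀ᴸ φ_t² dx + c ∫₀ᴸ θ_x² dx + c ∫₀ᴸ P_x² dx. -/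

import Mathlib

open Real intervalIntegral

/-- Spatial partial derivative of a function of `(x, t)`. -/
noncomputable def pdx (f : ℝ → ℝ → ℝ) : ℝ → ℝ → ℝ := fun x t => deriv (fun y => f y t) x

/-- Temporal partial derivative of a function of `(x, t)`. -/
noncomputable def pdt (f : ℝ → ℝ → ℝ) : ℝ → ℝ → ℝ := fun x t => deriv (fun s => f x s) t

/-- Classical solution of the vertically-damped thermodiffusive
Bresse–Timoshenko system with Dirichlet boundary conditions. -/
def IsSolutionV (L ρ1 ρ2 κ α ξ1 ξ2 τ0 δ r h μ d : ℝ) (φ ψ θ P : ℝ → ℝ → ℝ) : Prop :=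
  ContDiff ℝ (⊤ : ℕ∞) (Function.uncurry φ) ∧ ContDiff ℝ (⊤ : ℕ∞) (Function.uncurry ψ) ∧
  ContDiff ℝ (⊤ : ℕ∞) (Function.uncurry θ) ∧ ContDiff ℝ (⊤ : ℕ∞) (Function.uncurry P) ∧
  (∀ x ∈ Set.Ioo (0:ℝ) L, ∀ t > (0:ℝ),
    ρ1 * pdt (pdt φ) x t - κ * pdx (fun y s => pdx φ y s + ψ y s) x t + μ * pdt φ x t = 0 ∧
    -(ρ2 * pdx (pdt (pdt φ)) x t) - α * pdx (pdx ψ) x t + κ * (pdx φ x t + ψ x t)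
        - ξ1 * pdx θ x t - ξ2 * pdx P x t = 0 ∧
    τ0 * pdt θ x t + d * pdt P x t - δ * pdx (pdx θ) x t - ξ1 * pdx (pdt ψ) x t = 0 ∧
    d * pdt θ x t + r * pdt P x t - h * pdx (pdx P) x t - ξ2 * pdx (pdt ψ) x t = 0) ∧
  (∀ t ≥ (0:ℝ),
    φ 0 t = 0 ∧ φ L t = 0 ∧ ψ 0 t = 0 ∧ ψ L t = 0 ∧
    θ 0 t = 0 ∧ θ L t = 0 ∧ P 0 t = 0 ∧ P L t = 0)

section Helpers

open MeasureTheory Filter Metric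
open scoped Topology

variable {f : ℝ → ℝ → ℝ}

lemma hasDerivAt_slice_x (hf : ContDiff ℝ (⊤ : ℕ∞) (Function.uncurry f)) (x t : ℝ) :
    HasDerivAt (fun y => f y t) (fderiv ℝ (Function.uncurry f) (x, t) (1, 0)) x := by
  have h1 : HasFDerivAt (Function.uncurry f) (fderiv ℝ (Function.uncurry f) (x, t)) (x, t) :=
    (hf.differentiable (by simp)).differentiableAt.hasFDerivAt
  have h2 : HasDerivAt (fun y : ℝ => (y, t)) ((1:ℝ), (0:ℝ)) x := by
    simpa using (hasDerivAt_id x).prodMk (hasDerivAt_const x t)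
  simpa [Function.uncurry, Function.comp_def] using h1.comp_hasDerivAt x h2

lemma hasDerivAt_slice_t (hf : ContDiff ℝ (⊤ : ℕ∞) (Function.uncurry f)) (x t : ℝ) :
    HasDerivAt (fun s => f x s) (fderiv ℝ (Function.uncurry f) (x, t) (0, 1)) t := by
  have h1 : HasFDerivAt (Function.uncurry f) (fderiv ℝ (Function.uncurry f) (x, t)) (x, t) :=
    (hf.differentiable (by simp)).differentiableAt.hasFDerivAt
  have h2 : HasDerivAt (fun s : ℝ => (x, s)) ((0:ℝ), (1:ℝ)) t := by
    simpa using (hasDerivAt_const t x).prodMk (hasDerivAt_id t)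
  simpa [Function.uncurry, Function.comp_def] using h1.comp_hasDerivAt t h2

lemma pdx_eq (hf : ContDiff ℝ (⊤ : ℕ∞) (Function.uncurry f)) (x t : ℝ) :
    pdx f x t = fderiv ℝ (Function.uncurry f) (x, t) (1, 0) :=
  (hasDerivAt_slice_x hf x t).deriv

lemma pdt_eq (hf : ContDiff ℝ (⊤ : ℕ∞) (Function.uncurry f)) (x t : ℝ) :
    pdt f x t = fderiv ℝ (Function.uncurry f) (x, t) (0, 1) :=
  (hasDerivAt_slice_t hf x t).deriv

lemma hasDerivAt_pdx (hf : ContDiff ℝ (⊤ : ℕ∞) (Function.uncurry f)) (x t : ℝ) :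
    HasDerivAt (fun y => f y t) (pdx f x t) x := by
  rw [pdx_eq hf]; exact hasDerivAt_slice_x hf x t

lemma hasDerivAt_pdt (hf : ContDiff ℝ (⊤ : ℕ∞) (Function.uncurry f)) (x t : ℝ) :
    HasDerivAt (fun s => f x s) (pdt f x t) t := by
  rw [pdt_eq hf]; exact hasDerivAt_slice_t hf x t

lemma contDiff_pd_aux (hf : ContDiff ℝ (⊤ : ℕ∞) (Function.uncurry f)) (v : ℝ × ℝ) :
    ContDiff ℝ (⊤ : ℕ∞) (fun p : ℝ × ℝ => fderiv ℝ (Function.uncurry f) p v) := by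
  have h1 : ContDiff ℝ (⊤ : ℕ∞) (fderiv ℝ (Function.uncurry f)) :=
    (hf.fderiv_right (le_refl _))
  exact (ContinuousLinearMap.apply ℝ ℝ v).contDiff.comp h1

lemma contDiff_pdx (hf : ContDiff ℝ (⊤ : ℕ∞) (Function.uncurry f)) :
    ContDiff ℝ (⊤ : ℕ∞) (Function.uncurry (pdx f)) := by
  have h : Function.uncurry (pdx f) = fun p : ℝ × ℝ => fderiv ℝ (Function.uncurry f) p (1, 0) := by
    ext p; exact pdx_eq hf p.1 p.2
  rw [h]; exact contDiff_pd_aux hf _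

lemma contDiff_pdt (hf : ContDiff ℝ (⊤ : ℕ∞) (Function.uncurry f)) :
    ContDiff ℝ (⊤ : ℕ∞) (Function.uncurry (pdt f)) := by
  have h : Function.uncurry (pdt f) = fun p : ℝ × ℝ => fderiv ℝ (Function.uncurry f) p (0, 1) := by
    ext p; exact pdt_eq hf p.1 p.2
  rw [h]; exact contDiff_pd_aux hf _

lemma fderiv_eval (hf : ContDiff ℝ (⊤ : ℕ∞) (Function.uncurry f)) (v w : ℝ × ℝ) (p : ℝ × ℝ) :
    fderiv ℝ (fun q : ℝ × ℝ => fderiv ℝ (Function.uncurry f) q v) p w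
      = fderiv ℝ (fderiv ℝ (Function.uncurry f)) p w v := by
  have hg : DifferentiableAt ℝ (fderiv ℝ (Function.uncurry f)) p :=
    ((hf.fderiv_right (m := (⊤ : ℕ∞)) (le_refl _)).differentiable (by simp)).differentiableAt
  have h := ((ContinuousLinearMap.apply ℝ ℝ v).hasFDerivAt.comp p hg.hasFDerivAt).fderiv
  calc fderiv ℝ (fun q : ℝ × ℝ => fderiv ℝ (Function.uncurry f) q v) p w
      = (((ContinuousLinearMap.apply ℝ ℝ v)).comp
          (fderiv ℝ (fderiv ℝ (Function.uncurry f)) p)) w := by rw [← h]; rfl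
    _ = fderiv ℝ (fderiv ℝ (Function.uncurry f)) p w v := rfl

lemma pdx_pdt_comm (hf : ContDiff ℝ (⊤ : ℕ∞) (Function.uncurry f)) (x t : ℝ) :
    pdx (pdt f) x t = pdt (pdx f) x t := by
  have hsym : ∀ v w : ℝ × ℝ, fderiv ℝ (fderiv ℝ (Function.uncurry f)) (x, t) v w
      = fderiv ℝ (fderiv ℝ (Function.uncurry f)) (x, t) w v := by
    intro v w
    refine second_derivative_symmetric (f := Function.uncurry f)
      (f' := fderiv ℝ (Function.uncurry f)) (x := (x, t)) ?_ ?_ v w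
    · intro y; exact ((hf.differentiable (by simp)) y).hasFDerivAt
    · exact (((hf.fderiv_right (m := (⊤ : ℕ∞)) (le_refl _)).differentiable (by simp)) _).hasFDerivAt
  have h1 : pdx (pdt f) x t = fderiv ℝ (fderiv ℝ (Function.uncurry f)) (x, t) (1, 0) (0, 1) := by
    rw [pdx_eq (contDiff_pdt hf)]
    have h : Function.uncurry (pdt f)
        = fun q : ℝ × ℝ => fderiv ℝ (Function.uncurry f) q (0, 1) := by
      ext q; exact pdt_eq hf q.1 q.2
    rw [h, fderiv_eval hf]
  have h2 : pdt (pdx f) x t = fderiv ℝ (fderiv ℝ (Function.uncurry f)) (x, t) (0, 1) (1, 0) := by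
    rw [pdt_eq (contDiff_pdx hf)]
    have h : Function.uncurry (pdx f)
        = fun q : ℝ × ℝ => fderiv ℝ (Function.uncurry f) q (1, 0) := by
      ext q; exact pdx_eq hf q.1 q.2
    rw [h, fderiv_eval hf]
  rw [h1, h2, hsym]

lemma cont_slice_x (hc : Continuous (Function.uncurry f)) (t : ℝ) :
    Continuous (fun x => f x t) :=
  hc.comp (continuous_id.prodMk continuous_const)

lemma leibniz {L : ℝ} (hL : 0 < L) (hf : ContDiff ℝ (⊤ : ℕ∞) (Function.uncurry f)) (t₀ : ℝ) :
    HasDerivAt (fun s => ∫ x in (0:ℝ)..L, f x s) (∫ x in (0:ℝ)..L, pdt f x t₀) t₀ := by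
  have hcont : Continuous (Function.uncurry (pdt f)) := (contDiff_pdt hf).continuous
  obtain ⟨C, hC⟩ : ∃ C, ∀ p ∈ (Set.Icc (0:ℝ) L ×ˢ Set.Icc (t₀ - 1) (t₀ + 1)),
      ‖Function.uncurry (pdt f) p‖ ≤ C := by
    obtain ⟨C, hC⟩ := (IsCompact.exists_bound_of_continuousOn
      ((isCompact_Icc).prod isCompact_Icc) hcont.continuousOn)
    exact ⟨C, hC⟩
  have key := intervalIntegral.hasDerivAt_integral_of_dominated_loc_of_deriv_le
    (F := fun s x => f x s) (F' := fun s x => pdt f x s) (x₀ := t₀) (a := 0) (b := L)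
    (bound := fun _ => C) (s := ball t₀ 1) (μ := volume) (ball_mem_nhds t₀ one_pos)
    (Eventually.of_forall fun s => (cont_slice_x hf.continuous s).aestronglyMeasurable)
    ((cont_slice_x hf.continuous t₀).intervalIntegrable 0 L)
    ((cont_slice_x hcont t₀).aestronglyMeasurable)
    ?_ (intervalIntegrable_const) ?_
  · exact key.2
  · refine Eventually.of_forall fun x hx s hs => ?_
    have hxI : x ∈ Set.Icc (0:ℝ) L := by
      rw [Set.uIoc_of_le hL.le] at hx; exact ⟨hx.1.le, hx.2⟩
    have hsI : s ∈ Set.Icc (t₀ - 1) (t₀ + 1) := by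
      rw [mem_ball, Real.dist_eq, abs_sub_lt_iff] at hs
      constructor <;> linarith [hs.1, hs.2]
    exact hC (x, s) ⟨hxI, hsI⟩
  · exact Eventually.of_forall fun x _ s _ => hasDerivAt_pdt hf x s

lemma sq_integral_le {h : ℝ → ℝ} (hc : Continuous h) {x : ℝ} (hx : 0 ≤ x) :
    (∫ y in (0:ℝ)..x, h y)^2 ≤ x * ∫ y in (0:ℝ)..x, (h y)^2 := by
  set Iv := ∫ y in (0:ℝ)..x, h y with hIv
  have hint : IntervalIntegrable h volume 0 x := hc.intervalIntegrable 0 x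
  have hint2 : IntervalIntegrable (fun y => (h y)^2) volume 0 x :=
    (hc.pow 2).intervalIntegrable 0 x
  have expand : ∫ y in (0:ℝ)..x, (x * h y - Iv)^2
      = x^2 * (∫ y in (0:ℝ)..x, (h y)^2) - x * Iv^2 := by
    have hpt : ∀ y, (x * h y - Iv)^2 = x^2 * (h y)^2 - (2 * x * Iv) * h y + Iv^2 := by
      intro y; ring
    simp only [hpt]
    rw [intervalIntegral.integral_add (((hint2.const_mul _).sub (hint.const_mul _)))
      intervalIntegrable_const,
      intervalIntegral.integral_sub (hint2.const_mul _) (hint.const_mul _),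
      intervalIntegral.integral_const_mul, intervalIntegral.integral_const_mul,
      intervalIntegral.integral_const]
    simp only [smul_eq_mul, sub_zero, ← hIv]
    ring
  have hnn : 0 ≤ ∫ y in (0:ℝ)..x, (x * h y - Iv)^2 :=
    intervalIntegral.integral_nonneg hx (fun y _ => sq_nonneg _)
  rw [expand] at hnn
  rcases eq_or_lt_of_le hx with hx0 | hx0
  · simp [← hx0, hIv]
  · nlinarith [hnn]

lemma poincare {g g' : ℝ → ℝ} {L : ℝ} (hL : 0 < L)
    (hg : ∀ x, HasDerivAt g (g' x) x) (hc : Continuous g') (hg0 : g 0 = 0) :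
    ∫ x in (0:ℝ)..L, (g x)^2 ≤ L^2 * ∫ x in (0:ℝ)..L, (g' x)^2 := by
  have hint2 : ∀ a b : ℝ, IntervalIntegrable (fun y => (g' y)^2) volume a b :=
    fun a b => (hc.pow 2).intervalIntegrable a b
  have hgc : Continuous g := by
    have hd : Differentiable ℝ g := fun x => (hg x).differentiableAt
    exact hd.continuous
  have key : ∀ x ∈ Set.Icc (0:ℝ) L, (g x)^2 ≤ L * ∫ y in (0:ℝ)..L, (g' y)^2 := by
    intro x hx
    have hgx : g x = ∫ y in (0:ℝ)..x, g' y := by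
      rw [intervalIntegral.integral_eq_sub_of_hasDerivAt (fun y _ => hg y)
        (hc.intervalIntegrable 0 x), hg0, sub_zero]
    have h1 : (g x)^2 ≤ x * ∫ y in (0:ℝ)..x, (g' y)^2 := by
      rw [hgx]; exact sq_integral_le hc hx.1
    have h2 : (∫ y in (0:ℝ)..x, (g' y)^2) ≤ ∫ y in (0:ℝ)..L, (g' y)^2 :=
      intervalIntegral.integral_mono_interval le_rfl hx.1 hx.2
        (Filter.Eventually.of_forall fun y => sq_nonneg _) (hint2 0 L)
    calc (g x)^2 ≤ x * ∫ y in (0:ℝ)..x, (g' y)^2 := h1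
      _ ≤ L * ∫ y in (0:ℝ)..L, (g' y)^2 := by
          apply mul_le_mul hx.2 h2 (intervalIntegral.integral_nonneg hx.1
            (fun y _ => sq_nonneg _)) hL.le
  calc ∫ x in (0:ℝ)..L, (g x)^2
      ≤ ∫ _x in (0:ℝ)..L, (L * ∫ y in (0:ℝ)..L, (g' y)^2) := by
        apply intervalIntegral.integral_mono_on hL.le ((hgc.pow 2).intervalIntegrable 0 L)
          intervalIntegrable_const key
    _ = L^2 * ∫ x in (0:ℝ)..L, (g' x)^2 := by
        rw [intervalIntegral.integral_const]; simp only [smul_eq_mul]; ring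

lemma young2 {c1 c2 ξ : ℝ} (hc2 : 0 < c2) (hmul : ξ^2 = 4 * c1 * c2) (a b : ℝ) :
    ξ * (a * b) ≤ c1 * b^2 + c2 * a^2 := by
  nlinarith [sq_nonneg (2*c2*a - ξ*b), hc2, sq_nonneg b, sq_nonneg a]

lemma pdt_zero_of_boundary {f : ℝ → ℝ → ℝ} {a : ℝ} (hb : ∀ s ≥ (0:ℝ), f a s = 0)
    {t : ℝ} (ht : 0 < t) : pdt f a t = 0 := by
  have hev : (fun s => f a s) =ᶠ[nhds t] (fun _ => (0:ℝ)) := by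
    filter_upwards [eventually_gt_nhds ht] with s hs
    exact hb s hs.le
  show deriv (fun s => f a s) t = 0
  rw [hev.deriv_eq, deriv_const]

lemma pdt2_zero_of_boundary {f : ℝ → ℝ → ℝ} {a : ℝ} (hb : ∀ s ≥ (0:ℝ), f a s = 0)
    {t : ℝ} (ht : 0 < t) : pdt (pdt f) a t = 0 := by
  have hev : (fun s => pdt f a s) =ᶠ[nhds t] (fun _ => (0:ℝ)) := by
    filter_upwards [eventually_gt_nhds ht] with s hs
    exact pdt_zero_of_boundary hb hs
  show deriv (fun s => pdt f a s) t = 0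
  rw [hev.deriv_eq, deriv_const]

end Helpers

/-- Estimate for the multiplier functional
`F₂(t) = ρ₁ ∫ φ φₜ dx + (μ/2) ∫ φ² dx + (μρ₂/(2κ)) ∫ φₜ² dx + ρ₂ ∫ φₜₓ φₓ dx`
of the vertically-damped system. -/
theorem F2_estimate_vertical (L ρ1 ρ2 κ α ξ1 ξ2 τ0 δ r h μ d : ℝ)
    (hL : 0 < L) (hρ1 : 0 < ρ1) (hρ2 : 0 < ρ2) (hκ : 0 < κ) (hα : 0 < α)
    (hξ1 : 0 < ξ1) (hξ2 : 0 < ξ2) (hτ0 : 0 < τ0) (hδ : 0 < δ) (hr : 0 < r) (hh : 0 < h)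
    (hμ : 0 < μ) (hcrd : τ0 * r - d ^ 2 > 0) :
    ∃ c₀ > (0:ℝ), ∀ φ ψ θ P : ℝ → ℝ → ℝ,
      IsSolutionV L ρ1 ρ2 κ α ξ1 ξ2 τ0 δ r h μ d φ ψ θ P → ∀ t > (0:ℝ),
        deriv (fun s => ρ1 * (∫ x in (0:ℝ)..L, φ x s * pdt φ x s)
            + (μ / 2) * (∫ x in (0:ℝ)..L, (φ x s) ^ 2)
            + (μ * ρ2 / (2 * κ)) * (∫ x in (0:ℝ)..L, (pdt φ x s) ^ 2)
            + ρ2 * ∫ x in (0:ℝ)..L, pdx (pdt φ) x s * pdx φ x s) t ≤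
          -(ρ1 * ρ2 / κ) * (∫ x in (0:ℝ)..L, (pdt (pdt φ) x t) ^ 2)
            - (κ / 2) * (∫ x in (0:ℝ)..L, (pdx φ x t + ψ x t) ^ 2)
            - (α / 2) * (∫ x in (0:ℝ)..L, (pdx ψ x t) ^ 2)
            + ρ2 * (∫ x in (0:ℝ)..L, (pdx (pdt φ) x t) ^ 2)
            + ρ1 * (∫ x in (0:ℝ)..L, (pdt φ x t) ^ 2)
            + c₀ * (∫ x in (0:ℝ)..L, (pdx θ x t) ^ 2)
            + c₀ * ∫ x in (0:ℝ)..L, (pdx P x t) ^ 2 := by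

  refine ⟨(ξ1^2 + ξ2^2) * L^2 / α + 1, by positivity, ?_⟩
  rintro φ ψ θ P ⟨hφ, hψ, hθ, hP, hpde, hbc⟩ t ht
  -- smoothness of derivatives
  have hφt := contDiff_pdt hφ
  have hφtt := contDiff_pdt hφt
  have hφx := contDiff_pdx hφ
  have hφtx := contDiff_pdx hφt
  have hφttx := contDiff_pdx hφtt
  have hφxx := contDiff_pdx hφx
  have hψx := contDiff_pdx hψ
  have hψxx := contDiff_pdx hψx
  have hθx := contDiff_pdx hθ
  have hPx := contDiff_pdx hP
  -- continuity of slices at time t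
  have cφ := cont_slice_x hφ.continuous t
  have cψ := cont_slice_x hψ.continuous t
  have cφt := cont_slice_x hφt.continuous t
  have cφtt := cont_slice_x hφtt.continuous t
  have cφx := cont_slice_x hφx.continuous t
  have cφtx := cont_slice_x hφtx.continuous t
  have cφttx := cont_slice_x hφttx.continuous t
  have cφxx := cont_slice_x hφxx.continuous t
  have cψx := cont_slice_x hψx.continuous t
  have cψxx := cont_slice_x hψxx.continuous t
  have cθx := cont_slice_x hθx.continuous t
  have cPx := cont_slice_x hPx.continuous t
  obtain ⟨hb1, hb2, hb3, hb4, hb5, hb6, hb7, hb8⟩ := hbc t ht.le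
  -- vanishing of time derivatives at the boundary
  have hbtt0 : pdt (pdt φ) 0 t = 0 :=
    pdt2_zero_of_boundary (fun s hs => (hbc s hs).1) ht
  have hbttL : pdt (pdt φ) L t = 0 :=
    pdt2_zero_of_boundary (fun s hs => (hbc s hs).2.1) ht
  -- Step 1 : differentiate under the integral sign
  have h1 : HasDerivAt (fun s => ∫ x in (0:ℝ)..L, φ x s * pdt φ x s)
      (∫ x in (0:ℝ)..L, ((pdt φ x t)^2 + φ x t * pdt (pdt φ) x t)) t := by
    have hl := leibniz (f := fun x s => φ x s * pdt φ x s) hL (by exact hφ.mul hφt) t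
    have he : (∫ x in (0:ℝ)..L, pdt (fun x s => φ x s * pdt φ x s) x t)
        = ∫ x in (0:ℝ)..L, ((pdt φ x t)^2 + φ x t * pdt (pdt φ) x t) := by
      refine intervalIntegral.integral_congr fun x _ => ?_
      have hd : HasDerivAt (fun s => φ x s * pdt φ x s)
          ((pdt φ x t)^2 + φ x t * pdt (pdt φ) x t) t := by
        have hm := (hasDerivAt_pdt hφ x t).mul (hasDerivAt_pdt hφt x t)
        exact hm.congr_deriv (by ring)
      exact hd.deriv
    rwa [he] at hl
  have h2 : HasDerivAt (fun s => ∫ x in (0:ℝ)..L, (φ x s)^2)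
      (∫ x in (0:ℝ)..L, 2 * (φ x t * pdt φ x t)) t := by
    have hl := leibniz (f := fun x s => (φ x s)^2) hL (by exact hφ.pow 2) t
    have he : (∫ x in (0:ℝ)..L, pdt (fun x s => (φ x s)^2) x t)
        = ∫ x in (0:ℝ)..L, 2 * (φ x t * pdt φ x t) := by
      refine intervalIntegral.integral_congr fun x _ => ?_
      have hd : HasDerivAt (fun s => (φ x s)^2) (2 * (φ x t * pdt φ x t)) t := by
        have hm := (hasDerivAt_pdt hφ x t).pow 2
        exact hm.congr_deriv (by push_cast; ring)
      exact hd.deriv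
    rwa [he] at hl
  have h3 : HasDerivAt (fun s => ∫ x in (0:ℝ)..L, (pdt φ x s)^2)
      (∫ x in (0:ℝ)..L, 2 * (pdt φ x t * pdt (pdt φ) x t)) t := by
    have hl := leibniz (f := fun x s => (pdt φ x s)^2) hL (by exact hφt.pow 2) t
    have he : (∫ x in (0:ℝ)..L, pdt (fun x s => (pdt φ x s)^2) x t)
        = ∫ x in (0:ℝ)..L, 2 * (pdt φ x t * pdt (pdt φ) x t) := by
      refine intervalIntegral.integral_congr fun x _ => ?_
      have hd : HasDerivAt (fun s => (pdt φ x s)^2)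
          (2 * (pdt φ x t * pdt (pdt φ) x t)) t := by
        have hm := (hasDerivAt_pdt hφt x t).pow 2
        exact hm.congr_deriv (by push_cast; ring)
      exact hd.deriv
    rwa [he] at hl
  have h4 : HasDerivAt (fun s => ∫ x in (0:ℝ)..L, pdx (pdt φ) x s * pdx φ x s)
      (∫ x in (0:ℝ)..L, (pdx (pdt (pdt φ)) x t * pdx φ x t + (pdx (pdt φ) x t)^2)) t := by
    have hl := leibniz (f := fun x s => pdx (pdt φ) x s * pdx φ x s) hL
      (by exact hφtx.mul hφx) t
    have he : (∫ x in (0:ℝ)..L, pdt (fun x s => pdx (pdt φ) x s * pdx φ x s) x t)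
        = ∫ x in (0:ℝ)..L, (pdx (pdt (pdt φ)) x t * pdx φ x t + (pdx (pdt φ) x t)^2) := by
      refine intervalIntegral.integral_congr fun x _ => ?_
      have hd : HasDerivAt (fun s => pdx (pdt φ) x s * pdx φ x s)
          (pdx (pdt (pdt φ)) x t * pdx φ x t + (pdx (pdt φ) x t)^2) t := by
        have hm := (hasDerivAt_pdt hφtx x t).mul (hasDerivAt_pdt hφx x t)
        refine hm.congr_deriv ?_
        rw [← pdx_pdt_comm hφt x t, ← pdx_pdt_comm hφ x t]; ring
      exact hd.deriv
    rwa [he] at hl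
  have hF : HasDerivAt (fun s => ρ1 * (∫ x in (0:ℝ)..L, φ x s * pdt φ x s)
        + (μ / 2) * (∫ x in (0:ℝ)..L, (φ x s) ^ 2)
        + (μ * ρ2 / (2 * κ)) * (∫ x in (0:ℝ)..L, (pdt φ x s) ^ 2)
        + ρ2 * ∫ x in (0:ℝ)..L, pdx (pdt φ) x s * pdx φ x s)
      (ρ1 * (∫ x in (0:ℝ)..L, ((pdt φ x t)^2 + φ x t * pdt (pdt φ) x t))
        + (μ / 2) * (∫ x in (0:ℝ)..L, 2 * (φ x t * pdt φ x t))
        + (μ * ρ2 / (2 * κ)) * (∫ x in (0:ℝ)..L, 2 * (pdt φ x t * pdt (pdt φ) x t))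
        + ρ2 * (∫ x in (0:ℝ)..L, (pdx (pdt (pdt φ)) x t * pdx φ x t
            + (pdx (pdt φ) x t)^2))) t :=
    (((h1.const_mul ρ1).add (h2.const_mul (μ / 2))).add
      (h3.const_mul (μ * ρ2 / (2 * κ)))).add (h4.const_mul ρ2)
  rw [hF.deriv]
  -- split the four integrals
  have hS1 : (∫ x in (0:ℝ)..L, ((pdt φ x t)^2 + φ x t * pdt (pdt φ) x t))
      = (∫ x in (0:ℝ)..L, (pdt φ x t)^2) + ∫ x in (0:ℝ)..L, φ x t * pdt (pdt φ) x t :=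
    intervalIntegral.integral_add ((cφt.pow 2).intervalIntegrable 0 L)
      ((cφ.mul cφtt).intervalIntegrable 0 L)
  have hS2 : (∫ x in (0:ℝ)..L, 2 * (φ x t * pdt φ x t))
      = 2 * ∫ x in (0:ℝ)..L, φ x t * pdt φ x t :=
    intervalIntegral.integral_const_mul 2 _
  have hS3 : (∫ x in (0:ℝ)..L, 2 * (pdt φ x t * pdt (pdt φ) x t))
      = 2 * ∫ x in (0:ℝ)..L, pdt φ x t * pdt (pdt φ) x t :=
    intervalIntegral.integral_const_mul 2 _
  have hS4 : (∫ x in (0:ℝ)..L, (pdx (pdt (pdt φ)) x t * pdx φ x t + (pdx (pdt φ) x t)^2))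
      = (∫ x in (0:ℝ)..L, pdx (pdt (pdt φ)) x t * pdx φ x t)
        + ∫ x in (0:ℝ)..L, (pdx (pdt φ) x t)^2 :=
    intervalIntegral.integral_add ((cφttx.mul cφx).intervalIntegrable 0 L)
      ((cφtx.pow 2).intervalIntegrable 0 L)
  rw [hS1, hS2, hS3, hS4]
  -- name all the integrals
  set a1 := ∫ x in (0:ℝ)..L, φ x t * pdt (pdt φ) x t with ha1
  set a2 := ∫ x in (0:ℝ)..L, φ x t * pdt φ x t with ha2
  set a3 := ∫ x in (0:ℝ)..L, pdt φ x t * pdt (pdt φ) x t with ha3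
  set a4 := ∫ x in (0:ℝ)..L, pdx (pdt (pdt φ)) x t * pdx φ x t with ha4
  set a5 := ∫ x in (0:ℝ)..L, (pdt φ x t)^2 with ha5
  set a6 := ∫ x in (0:ℝ)..L, (pdx (pdt φ) x t)^2 with ha6
  set a7 := ∫ x in (0:ℝ)..L, (pdt (pdt φ) x t)^2 with ha7
  set a8 := ∫ x in (0:ℝ)..L, (pdx φ x t + ψ x t)^2 with ha8
  set a9 := ∫ x in (0:ℝ)..L, (pdx ψ x t)^2 with ha9
  set a14 := ∫ x in (0:ℝ)..L, (pdx θ x t)^2 with ha14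
  set a15 := ∫ x in (0:ℝ)..L, (pdx P x t)^2 with ha15
  set a10 := ∫ x in (0:ℝ)..L, pdx θ x t * ψ x t with ha10
  set a11 := ∫ x in (0:ℝ)..L, pdx P x t * ψ x t with ha11
  set a12 := ∫ x in (0:ℝ)..L, pdx ψ x t * pdt (pdt φ) x t with ha12
  set a13 := ∫ x in (0:ℝ)..L, ψ x t * (pdx φ x t + ψ x t) with ha13
  set a16 := ∫ x in (0:ℝ)..L, (ψ x t)^2 with ha16
  set a17 := ∫ x in (0:ℝ)..L, pdx φ x t * (pdx φ x t + ψ x t) with ha17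
  -- congruence tool : integrands that agree on the open interval
  have hae : ∀ᵐ x : ℝ ∂MeasureTheory.volume, x ≠ L := by
    refine MeasureTheory.ae_iff.mpr ?_
    simpa using Real.volume_singleton
  have congrIoo : ∀ (f g : ℝ → ℝ), (∀ x ∈ Set.Ioo (0:ℝ) L, f x = g x) →
      (∫ x in (0:ℝ)..L, f x) = ∫ x in (0:ℝ)..L, g x := by
    intro f g hfg
    refine intervalIntegral.integral_congr_ae ?_
    filter_upwards [hae] with x hx hxI
    rw [Set.uIoc_of_le hL.le] at hxI
    exact hfg x ⟨hxI.1, lt_of_le_of_ne hxI.2 hx⟩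
  -- integration by parts tool
  have parts : ∀ (u v u' v' : ℝ → ℝ), (∀ x, HasDerivAt u (u' x) x) →
      (∀ x, HasDerivAt v (v' x) x) → Continuous u' → Continuous v' →
      (∫ x in (0:ℝ)..L, u x * v' x)
        = u L * v L - u 0 * v 0 - ∫ x in (0:ℝ)..L, u' x * v x := by
    intro u v u' v' hu hv hcu hcv
    exact intervalIntegral.integral_mul_deriv_eq_deriv_mul (fun x _ => hu x) (fun x _ => hv x)
      (hcu.intervalIntegrable 0 L) (hcv.intervalIntegrable 0 L)
  have hadd : ∀ x s : ℝ, pdx (fun y s' => pdx φ y s' + ψ y s') x s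
      = pdx (pdx φ) x s + pdx ψ x s :=
    fun x s => ((hasDerivAt_pdx hφx x s).add (hasDerivAt_pdx hψ x s)).deriv
  -- Identity F1 : ρ1 a1 + μ a2 = -κ a17
  have hcongr1 : (∫ x in (0:ℝ)..L,
        (ρ1 * (φ x t * pdt (pdt φ) x t) + μ * (φ x t * pdt φ x t)))
      = ∫ x in (0:ℝ)..L, κ * (φ x t * (pdx (pdx φ) x t + pdx ψ x t)) := by
    refine congrIoo _ _ fun x hx => ?_
    have he := (hpde x hx t ht).1
    rw [hadd x t] at he
    linear_combination φ x t * he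
  have hsplit1 : (∫ x in (0:ℝ)..L,
        (ρ1 * (φ x t * pdt (pdt φ) x t) + μ * (φ x t * pdt φ x t)))
      = ρ1 * a1 + μ * a2 := by
    rw [intervalIntegral.integral_add ((continuous_const.fun_mul (cφ.fun_mul cφtt)).intervalIntegrable 0 L)
      ((continuous_const.fun_mul (cφ.fun_mul cφt)).intervalIntegrable 0 L),
      intervalIntegral.integral_const_mul, intervalIntegral.integral_const_mul,
      ← ha1, ← ha2]
  have hparts1 : (∫ x in (0:ℝ)..L, φ x t * (pdx (pdx φ) x t + pdx ψ x t)) = - a17 := by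
    have hp := parts (fun x => φ x t) (fun x => pdx φ x t + ψ x t)
      (fun x => pdx φ x t) (fun x => pdx (pdx φ) x t + pdx ψ x t)
      (fun x => hasDerivAt_pdx hφ x t)
      (fun x => (hasDerivAt_pdx hφx x t).add (hasDerivAt_pdx hψ x t))
      cφx (cφxx.add cψx)
    beta_reduce at hp
    rw [hb1, hb2, ← ha17] at hp
    rw [hp]; ring
  have F1 : ρ1 * a1 + μ * a2 = -(κ * a17) := by
    rw [← hsplit1, hcongr1, intervalIntegral.integral_const_mul, hparts1]; ring
  -- Identity F2 : a17 = a8 - a13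
  have F2 : a17 = a8 - a13 := by
    rw [ha17, ha8, ha13, ← intervalIntegral.integral_sub
      (((cφx.fun_add cψ).fun_pow 2).intervalIntegrable 0 L)
      ((cψ.fun_mul (cφx.fun_add cψ)).intervalIntegrable 0 L)]
    refine intervalIntegral.integral_congr fun x _ => ?_
    ring
  -- Identity F3 : a4 = -(ρ1/κ) a7 - (μ/κ) a3 + a12
  have hparts2 : a4 = - ∫ x in (0:ℝ)..L, pdx (pdx φ) x t * pdt (pdt φ) x t := by
    have hcomm : a4 = ∫ x in (0:ℝ)..L, pdx φ x t * pdx (pdt (pdt φ)) x t := by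
      rw [ha4]; exact intervalIntegral.integral_congr fun x _ => mul_comm _ _
    have hp := parts (fun x => pdx φ x t) (fun x => pdt (pdt φ) x t)
      (fun x => pdx (pdx φ) x t) (fun x => pdx (pdt (pdt φ)) x t)
      (fun x => hasDerivAt_pdx hφx x t) (fun x => hasDerivAt_pdx hφtt x t)
      cφxx cφttx
    beta_reduce at hp
    rw [hbtt0, hbttL] at hp
    rw [hcomm, hp]; ring
  have hcongr2 : (∫ x in (0:ℝ)..L, pdx (pdx φ) x t * pdt (pdt φ) x t)
      = ∫ x in (0:ℝ)..L, ((ρ1/κ) * (pdt (pdt φ) x t)^2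
          + (μ/κ) * (pdt φ x t * pdt (pdt φ) x t) - pdx ψ x t * pdt (pdt φ) x t) := by
    refine congrIoo _ _ fun x hx => ?_
    have he := (hpde x hx t ht).1
    rw [hadd x t] at he
    have hκ' : κ ≠ 0 := ne_of_gt hκ
    have hB' : pdx (pdx φ) x t = (ρ1 * pdt (pdt φ) x t + μ * pdt φ x t) / κ - pdx ψ x t := by
      field_simp
      linarith [he]
    rw [hB']
    field_simp
  have hsplit2 : (∫ x in (0:ℝ)..L, ((ρ1/κ) * (pdt (pdt φ) x t)^2
          + (μ/κ) * (pdt φ x t * pdt (pdt φ) x t) - pdx ψ x t * pdt (pdt φ) x t))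
      = (ρ1/κ) * a7 + (μ/κ) * a3 - a12 := by
    rw [intervalIntegral.integral_sub
      (((continuous_const.fun_mul (cφtt.fun_pow 2)).fun_add
        (continuous_const.fun_mul (cφt.fun_mul cφtt))).intervalIntegrable 0 L)
      ((cψx.fun_mul cφtt).intervalIntegrable 0 L),
      intervalIntegral.integral_add ((continuous_const.fun_mul (cφtt.fun_pow 2)).intervalIntegrable 0 L)
        ((continuous_const.fun_mul (cφt.fun_mul cφtt)).intervalIntegrable 0 L),
      intervalIntegral.integral_const_mul, intervalIntegral.integral_const_mul,
      ← ha7, ← ha3, ← ha12]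
  have F3 : a4 = -(ρ1/κ) * a7 - (μ/κ) * a3 + a12 := by
    rw [hparts2, hcongr2, hsplit2]; ring
  -- Identity F4 : ρ2 (-a12) + α (-a9) = κ a13 - ξ1 a10 - ξ2 a11
  have hcongr3 : (∫ x in (0:ℝ)..L, (ρ2 * (ψ x t * pdx (pdt (pdt φ)) x t)
        + α * (ψ x t * pdx (pdx ψ) x t)))
      = ∫ x in (0:ℝ)..L, (κ * (ψ x t * (pdx φ x t + ψ x t))
        - ξ1 * (pdx θ x t * ψ x t) - ξ2 * (pdx P x t * ψ x t)) := by
    refine congrIoo _ _ fun x hx => ?_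
    have he := (hpde x hx t ht).2.1
    linear_combination (-(ψ x t)) * he
  have hpψφ : (∫ x in (0:ℝ)..L, ψ x t * pdx (pdt (pdt φ)) x t) = - a12 := by
    have hp := parts (fun x => ψ x t) (fun x => pdt (pdt φ) x t)
      (fun x => pdx ψ x t) (fun x => pdx (pdt (pdt φ)) x t)
      (fun x => hasDerivAt_pdx hψ x t) (fun x => hasDerivAt_pdx hφtt x t) cψx cφttx
    beta_reduce at hp
    rw [hb3, hb4, ← ha12] at hp
    rw [hp]; ring
  have hpψψ : (∫ x in (0:ℝ)..L, ψ x t * pdx (pdx ψ) x t) = - a9 := by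
    have hp := parts (fun x => ψ x t) (fun x => pdx ψ x t)
      (fun x => pdx ψ x t) (fun x => pdx (pdx ψ) x t)
      (fun x => hasDerivAt_pdx hψ x t) (fun x => hasDerivAt_pdx hψx x t) cψx cψxx
    beta_reduce at hp
    rw [hb3, hb4] at hp
    have h9 : (∫ x in (0:ℝ)..L, pdx ψ x t * pdx ψ x t) = a9 := by
      rw [ha9]
      exact intervalIntegral.integral_congr fun x _ => (sq (pdx ψ x t)).symm
    rw [hp, h9]; ring
  have F4 : ρ2 * (- a12) + α * (- a9) = κ * a13 - ξ1 * a10 - ξ2 * a11 := by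
    have hl : (∫ x in (0:ℝ)..L, (ρ2 * (ψ x t * pdx (pdt (pdt φ)) x t)
          + α * (ψ x t * pdx (pdx ψ) x t)))
        = ρ2 * (- a12) + α * (- a9) := by
      rw [intervalIntegral.integral_add
        ((continuous_const.fun_mul (cψ.fun_mul cφttx)).intervalIntegrable 0 L)
        ((continuous_const.fun_mul (cψ.fun_mul cψxx)).intervalIntegrable 0 L),
        intervalIntegral.integral_const_mul, intervalIntegral.integral_const_mul,
        hpψφ, hpψψ]
    have hr : (∫ x in (0:ℝ)..L, (κ * (ψ x t * (pdx φ x t + ψ x t))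
          - ξ1 * (pdx θ x t * ψ x t) - ξ2 * (pdx P x t * ψ x t)))
        = κ * a13 - ξ1 * a10 - ξ2 * a11 := by
      rw [intervalIntegral.integral_sub
        (((continuous_const.fun_mul (cψ.fun_mul (cφx.fun_add cψ))).fun_sub
          (continuous_const.fun_mul (cθx.fun_mul cψ))).intervalIntegrable 0 L)
        ((continuous_const.fun_mul (cPx.fun_mul cψ)).intervalIntegrable 0 L),
        intervalIntegral.integral_sub
          ((continuous_const.fun_mul (cψ.fun_mul (cφx.fun_add cψ))).intervalIntegrable 0 L)
          ((continuous_const.fun_mul (cθx.fun_mul cψ)).intervalIntegrable 0 L),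
        intervalIntegral.integral_const_mul, intervalIntegral.integral_const_mul,
        intervalIntegral.integral_const_mul, ← ha13, ← ha10, ← ha11]
    rw [← hl, hcongr3, hr]
  -- Poincaré inequality for ψ
  have hPoin : a16 ≤ L^2 * a9 := by
    rw [ha16, ha9]
    exact poincare hL (fun x => hasDerivAt_pdx hψ x t) cψx hb3
  -- Young + Poincaré bounds
  have h14nn : 0 ≤ a14 := by
    rw [ha14]; exact intervalIntegral.integral_nonneg hL.le fun x _ => sq_nonneg _
  have h15nn : 0 ≤ a15 := by
    rw [ha15]; exact intervalIntegral.integral_nonneg hL.le fun x _ => sq_nonneg _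
  have h8nn : 0 ≤ a8 := by
    rw [ha8]; exact intervalIntegral.integral_nonneg hL.le fun x _ => sq_nonneg _
  have hB : ∀ (ξ : ℝ), 0 < ξ → ∀ (g : ℝ → ℝ → ℝ), ContDiff ℝ (⊤ : ℕ∞) (Function.uncurry g) →
      ξ * (∫ x in (0:ℝ)..L, pdx g x t * ψ x t)
        ≤ (α/4) * a9 + (ξ^2*L^2/α) * ∫ x in (0:ℝ)..L, (pdx g x t)^2 := by
    intro ξ hξ g hg
    have cgx := cont_slice_x (contDiff_pdx hg).continuous t
    have hmul : ξ^2 = 4 * (α/(4*L^2)) * (ξ^2*L^2/α) := by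
      field_simp
    have hpt : ∀ x : ℝ, ξ * (pdx g x t * ψ x t)
        ≤ (α/(4*L^2)) * (ψ x t)^2 + (ξ^2*L^2/α) * (pdx g x t)^2 := fun x =>
      young2 (by positivity) hmul (pdx g x t) (ψ x t)
    have hmono : (∫ x in (0:ℝ)..L, ξ * (pdx g x t * ψ x t))
        ≤ ∫ x in (0:ℝ)..L, ((α/(4*L^2)) * (ψ x t)^2 + (ξ^2*L^2/α) * (pdx g x t)^2) :=
      intervalIntegral.integral_mono_on hL.le
        ((continuous_const.mul (cgx.mul cψ)).intervalIntegrable 0 L)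
        (((continuous_const.mul (cψ.pow 2)).add (continuous_const.mul (cgx.pow 2))).intervalIntegrable 0 L)
        (fun x _ => hpt x)
    rw [intervalIntegral.integral_const_mul] at hmono
    rw [intervalIntegral.integral_add ((continuous_const.fun_mul (cψ.fun_pow 2)).intervalIntegrable 0 L)
      ((continuous_const.fun_mul (cgx.fun_pow 2)).intervalIntegrable 0 L),
      intervalIntegral.integral_const_mul, intervalIntegral.integral_const_mul,
      ← ha16] at hmono
    have hPo : (α/(4*L^2)) * a16 ≤ (α/4) * a9 := by
      have := mul_le_mul_of_nonneg_left hPoin (le_of_lt (show (0:ℝ) < α/(4*L^2) by positivity))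
      calc (α/(4*L^2)) * a16 ≤ (α/(4*L^2)) * (L^2 * a9) := this
        _ = (α/4) * a9 := by field_simp
    linarith
  have hB1 : ξ1 * a10 ≤ (α/4) * a9 + (ξ1^2*L^2/α) * a14 := by
    have := hB ξ1 hξ1 θ hθ
    rw [← ha10, ← ha14] at this
    exact this
  have hB2 : ξ2 * a11 ≤ (α/4) * a9 + (ξ2^2*L^2/α) * a15 := by
    have := hB ξ2 hξ2 P hP
    rw [← ha11, ← ha15] at this
    exact this
  -- assemble everything
  have E : ρ1 * (a5 + a1) + (μ / 2) * (2 * a2) + (μ * ρ2 / (2 * κ)) * (2 * a3)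
        + ρ2 * (a4 + a6)
      = ρ1 * a5 + ρ2 * a6 - (ρ1*ρ2/κ) * a7 - κ * a8 - α * a9 + ξ1 * a10 + ξ2 * a11 := by
    have hκ' : κ ≠ 0 := ne_of_gt hκ
    linear_combination F1 - κ * F2 + ρ2 * F3 - F4
  have hq8 : 0 ≤ κ * a8 := mul_nonneg hκ.le h8nn
  have hq14 : 0 ≤ (ξ2^2*L^2/α) * a14 := mul_nonneg (by positivity) h14nn
  have hq15 : 0 ≤ (ξ1^2*L^2/α) * a15 := mul_nonneg (by positivity) h15nn
  have hd14 : ((ξ1 ^ 2 + ξ2 ^ 2) * L ^ 2 / α + 1) * a14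
      = ξ1 ^ 2 * L ^ 2 / α * a14 + ξ2 ^ 2 * L ^ 2 / α * a14 + a14 := by ring
  have hd15 : ((ξ1 ^ 2 + ξ2 ^ 2) * L ^ 2 / α + 1) * a15
      = ξ1 ^ 2 * L ^ 2 / α * a15 + ξ2 ^ 2 * L ^ 2 / α * a15 + a15 := by ring
  have hd8 : κ / 2 * a8 + κ / 2 * a8 = κ * a8 := by ring
  have hd9 : α / 4 * a9 + α / 4 * a9 + α / 2 * a9 = α * a9 := by ring
  have hd7 : -(ρ1 * ρ2 / κ) * a7 = -(ρ1 * ρ2 / κ * a7) := by ring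
  linarith [E, hB1, hB2, hq8, hq14, hq15, h14nn, h15nn, hd14, hd15, hd8, hd9, hd7]
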